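/- arXiv:math/0503658 — 2 statements merged into one kernel-verified Lean document; each statement's English description precedes it below -/
import Mathlib

section
/- The sequence 1 → Z(G) → G → W → 1 is exact, where G = ⟨a, b, c ∣ a²b = ba², b²a = ab², a²c = ca², b²c = cb², a²b² = c²⟩, W = ⟨a, b, c ∣ a² = b² = c² = 1⟩, and the map G → W sends each generator to its namesake; i.e., G is a central extension of W by its center. -/
/-- Relations of the presentation `⟨a,b,c ∣ a²b=ba², b²a=ab², a²c=ca², b²c=cb², a²b²=c²⟩`
of the braid group `B₂(Σ_{1,0})`, as elements of the free group on `a = 0`, `b = 1`, `c = 2`. -/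
def grels : Set (FreeGroup (Fin 3)) :=
  { FreeGroup.of 0 ^ 2 * FreeGroup.of 1 * (FreeGroup.of 1 * FreeGroup.of 0 ^ 2)⁻¹,
    FreeGroup.of 1 ^ 2 * FreeGroup.of 0 * (FreeGroup.of 0 * FreeGroup.of 1 ^ 2)⁻¹,
    FreeGroup.of 0 ^ 2 * FreeGroup.of 2 * (FreeGroup.of 2 * FreeGroup.of 0 ^ 2)⁻¹,
    FreeGroup.of 1 ^ 2 * FreeGroup.of 2 * (FreeGroup.of 2 * FreeGroup.of 1 ^ 2)⁻¹,
    FreeGroup.of 0 ^ 2 * FreeGroup.of 1 ^ 2 * (FreeGroup.of 2 ^ 2)⁻¹ }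

/-- Relations `a² = b² = c² = 1` of the universal Coxeter group `W(a,b,c)`. -/
def wrels : Set (FreeGroup (Fin 3)) :=
  { FreeGroup.of 0 ^ 2, FreeGroup.of 1 ^ 2, FreeGroup.of 2 ^ 2 }

/-- The braid group `B₂(Σ_{1,0})` via the presentation above. -/
abbrev G := PresentedGroup grels

/-- The universal Coxeter group `W(a,b,c) = ℤ/2 * ℤ/2 * ℤ/2`. -/
abbrev W := PresentedGroup wrels

def ga : G := PresentedGroup.of 0
def gb : G := PresentedGroup.of 1
def gc : G := PresentedGroup.of 2
def wa : W := PresentedGroup.of 0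
def wb : W := PresentedGroup.of 1
def wc : W := PresentedGroup.of 2

/-!
The squares `a²` and `b²` commute with every generator by the relations, and `c² = a²b²`, so the
kernel of `G → W`, which is normally generated by the three squares, is central. Conversely, the
image of a central element commutes with every generator of `W = ℤ/2 * ℤ/2 * ℤ/2`, and `W` has
trivial centre: letting `W` act on words without two equal adjacent letters gives every element a
unique such normal form `w`, and if `w` is nonempty, a letter `j` different from its first and last
letters makes `j w` and `w j` two different normal forms.
-/

namespace PresentedGroup

variable {α : Type*}

theorem mem_center_of_forall_commute_of {rels : Set (FreeGroup α)} {x : PresentedGroup rels}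
    (hx : ∀ i, Commute (of i) x) : x ∈ Subgroup.center (PresentedGroup rels) := by
  rw [← Subgroup.centralizer_univ, ← Subgroup.coe_top, ← closure_range_of rels,
    Subgroup.centralizer_closure, Subgroup.mem_centralizer_iff]
  rintro _ ⟨i, rfl⟩
  exact hx i

theorem ker_le_of_comp_mk {R S : Set (FreeGroup α)} {p : PresentedGroup R →* PresentedGroup S}
    (hp : p.comp (mk R) = mk S) {N : Subgroup (PresentedGroup R)} [N.Normal]
    (hN : ∀ s ∈ S, mk R s ∈ N) : p.ker ≤ N := by
  intro x hx
  obtain ⟨z, rfl⟩ := mk_surjective R x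
  have hz : z ∈ Subgroup.normalClosure S := by
    rw [← mk_eq_one_iff, ← hp]
    exact hx
  exact Subgroup.normalClosure_le_normal (N := N.comap (mk R)) hN hz

end PresentedGroup

abbrev UniversalCoxeterGroup (ι : Type*) :=
  PresentedGroup (Set.range fun i : ι => FreeGroup.of i ^ 2)

namespace UniversalCoxeterGroup

open PresentedGroup

variable {ι : Type*}

theorem of_sq (i : ι) : (of i : UniversalCoxeterGroup ι) ^ 2 = 1 :=
  (map_pow _ _ _).symm.trans (one_of_mem ⟨i, rfl⟩)

theorem of_inv (i : ι) : (of i : UniversalCoxeterGroup ι)⁻¹ = of i :=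
  inv_eq_of_mul_eq_one_left (by rw [← sq, of_sq])

def wordProd (l : List ι) : UniversalCoxeterGroup ι := (l.map of).prod

@[simp]
theorem wordProd_nil : wordProd ([] : List ι) = 1 := rfl

@[simp]
theorem wordProd_cons (i : ι) (l : List ι) : wordProd (i :: l) = of i * wordProd l := by
  simp [wordProd]

theorem wordProd_append (l₁ l₂ : List ι) : wordProd (l₁ ++ l₂) = wordProd l₁ * wordProd l₂ := by
  simp [wordProd]

variable [DecidableEq ι]

def consCancel (i : ι) : List ι → List ι
  | [] => [i]
  | j :: l => if j = i then l else i :: j :: l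

theorem consCancel_of_head?_ne {i : ι} {l : List ι} (h : ∀ j ∈ l.head?, j ≠ i) :
    consCancel i l = i :: l := by
  cases l with
  | nil => rfl
  | cons j l => exact if_neg (h j rfl)

theorem wordProd_consCancel (i : ι) (l : List ι) :
    wordProd (consCancel i l) = of i * wordProd l := by
  cases l with
  | nil => simp [consCancel]
  | cons j l =>
    by_cases hj : j = i
    · subst hj
      simp [consCancel, ← mul_assoc, ← sq, of_sq]
    · simp [consCancel, hj]

abbrev ReducedWord (ι : Type*) := {l : List ι // l.IsChain (· ≠ ·)}

theorem isChain_consCancel (i : ι) {l : List ι} (hl : l.IsChain (· ≠ ·)) :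
    (consCancel i l).IsChain (· ≠ ·) := by
  cases l with
  | nil => exact List.isChain_singleton i
  | cons j l =>
    by_cases hj : j = i
    · simpa [consCancel, hj] using hl.tail
    · simpa [consCancel, hj, Ne.symm hj] using hl

theorem consCancel_consCancel (i : ι) {l : List ι} (hl : l.IsChain (· ≠ ·)) :
    consCancel i (consCancel i l) = l := by
  cases l with
  | nil => simp [consCancel]
  | cons j l =>
    by_cases hj : j = i
    · subst hj
      rw [show consCancel j (j :: l) = l from if_pos rfl]
      exact consCancel_of_head?_ne fun k hk => (List.isChain_cons.mp hl).1 k hk |>.symm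
    · simp [consCancel, hj]

def consCancelPerm (i : ι) : Equiv.Perm (ReducedWord ι) :=
  Function.Involutive.toPerm (fun l => ⟨consCancel i l.1, isChain_consCancel i l.2⟩)
    fun l => Subtype.ext (consCancel_consCancel i l.2)

def toPerm : UniversalCoxeterGroup ι →* Equiv.Perm (ReducedWord ι) :=
  toGroup (f := consCancelPerm) <| by
    rintro _ ⟨i, rfl⟩
    ext l : 2
    exact consCancel_consCancel i l.2

theorem toPerm_of (i : ι) : toPerm (of i : UniversalCoxeterGroup ι) = consCancelPerm i :=
  toGroup.of _

theorem wordProd_toPerm (w : UniversalCoxeterGroup ι) (l : ReducedWord ι) :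
    wordProd (toPerm w l).1 = w * wordProd l.1 := by
  induction w using induction_on generalizing l with
  | _ z =>
    induction z generalizing l with
    | C1 => simp
    | of i => exact wordProd_consCancel i l.1
    | inv_of i _ =>
      rw [map_inv]
      exact (of_inv i).symm ▸ wordProd_consCancel i l.1
    | mul x y hx hy => rw [map_mul, map_mul, Equiv.Perm.mul_apply, hx, hy, mul_assoc]

def normalForm (w : UniversalCoxeterGroup ι) : ReducedWord ι := toPerm w ⟨[], List.isChain_nil⟩

theorem wordProd_normalForm (w : UniversalCoxeterGroup ι) : wordProd (normalForm w).1 = w :=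
  (wordProd_toPerm w _).trans (mul_one w)

theorem normalForm_wordProd (l : ReducedWord ι) : normalForm (wordProd l.1) = l := by
  obtain ⟨l, hl⟩ := l
  induction l with
  | nil => rfl
  | cons i l ih =>
    rw [normalForm, wordProd_cons, map_mul, Equiv.Perm.mul_apply, ← normalForm, ih hl.tail,
      toPerm_of]
    exact Subtype.ext (consCancel_of_head?_ne fun j hj => (List.isChain_cons.mp hl).1 j hj |>.symm)

theorem injOn_wordProd : Set.InjOn wordProd {l : List ι | l.IsChain (· ≠ ·)} :=
  fun l₁ h₁ l₂ h₂ h => congrArg Subtype.val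
    ((normalForm_wordProd ⟨l₁, h₁⟩).symm.trans (h ▸ normalForm_wordProd ⟨l₂, h₂⟩))

theorem eq_one_of_forall_commute (hι : ∀ a b : ι, ∃ j, j ≠ a ∧ j ≠ b)
    {z : UniversalCoxeterGroup ι} (hz : ∀ i, Commute (of i) z) : z = 1 := by
  obtain ⟨⟨l, hl⟩, rfl⟩ : ∃ l : ReducedWord ι, wordProd l.1 = z := ⟨_, wordProd_normalForm z⟩
  cases l with
  | nil => rfl
  | cons x t =>
    obtain ⟨j, hjx, hj_last⟩ := hι x ((x :: t).getLast (List.cons_ne_nil x t))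
    have h_cons : (j :: x :: t).IsChain (· ≠ ·) := List.isChain_cons_cons.mpr ⟨hjx, hl⟩
    have h_append : (x :: t ++ [j]).IsChain (· ≠ ·) :=
      List.isChain_append.mpr ⟨hl, List.isChain_singleton j, by
        simpa [List.getLast?_eq_some_getLast (List.cons_ne_nil x t)] using hj_last.symm⟩
    have h_eq := injOn_wordProd h_cons h_append <| by
      rw [wordProd_cons, (hz j).eq, wordProd_append]
      simp
    exact (hjx (List.cons.inj h_eq).1).elim

end UniversalCoxeterGroup

theorem wrels_eq_range : wrels = Set.range fun i : Fin 3 => FreeGroup.of i ^ 2 := by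
  ext r
  simp [wrels, Fin.exists_fin_succ, eq_comm]

def W.mulEquivUniversalCoxeterGroup : W ≃* UniversalCoxeterGroup (Fin 3) :=
  QuotientGroup.quotientMulEquivOfEq (congrArg Subgroup.normalClosure wrels_eq_range)

theorem W.eq_one_of_forall_commute {z : W} (hz : ∀ i, Commute (PresentedGroup.of i) z) :
    z = 1 := by
  apply mulEquivUniversalCoxeterGroup.injective
  rw [map_one]
  exact UniversalCoxeterGroup.eq_one_of_forall_commute (by decide)
    fun i => (hz i).map mulEquivUniversalCoxeterGroup

theorem commute_ga_sq_gb : Commute (ga ^ 2) gb :=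
  PresentedGroup.mk_eq_mk_of_mul_inv_mem (by simp [grels])

theorem commute_ga_sq_gc : Commute (ga ^ 2) gc :=
  PresentedGroup.mk_eq_mk_of_mul_inv_mem (by simp [grels])

theorem commute_gb_sq_ga : Commute (gb ^ 2) ga :=
  PresentedGroup.mk_eq_mk_of_mul_inv_mem (by simp [grels])

theorem commute_gb_sq_gc : Commute (gb ^ 2) gc :=
  PresentedGroup.mk_eq_mk_of_mul_inv_mem (by simp [grels])

theorem ga_sq_mul_gb_sq : ga ^ 2 * gb ^ 2 = gc ^ 2 :=
  PresentedGroup.mk_eq_mk_of_mul_inv_mem (by simp [grels])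

theorem ga_sq_mem_center : ga ^ 2 ∈ Subgroup.center G :=
  PresentedGroup.mem_center_of_forall_commute_of fun i => by
    fin_cases i
    exacts [((Commute.refl ga).pow_left 2).symm, commute_ga_sq_gb.symm, commute_ga_sq_gc.symm]

theorem gb_sq_mem_center : gb ^ 2 ∈ Subgroup.center G :=
  PresentedGroup.mem_center_of_forall_commute_of fun i => by
    fin_cases i
    exacts [commute_gb_sq_ga.symm, ((Commute.refl gb).pow_left 2).symm, commute_gb_sq_gc.symm]

theorem G.of_sq_mem_center (i : Fin 3) : (PresentedGroup.of i : G) ^ 2 ∈ Subgroup.center G := by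
  fin_cases i
  · exact ga_sq_mem_center
  · exact gb_sq_mem_center
  · exact ga_sq_mul_gb_sq ▸ Subgroup.mul_mem _ ga_sq_mem_center gb_sq_mem_center

theorem stmt_14 (p : G →* W) (hpa : p ga = wa) (hpb : p gb = wb) (hpc : p gc = wc) :
    Function.Surjective p ∧ p.ker = Subgroup.center G := by
  have hp_of : ∀ i, p (PresentedGroup.of i) = PresentedGroup.of i := by
    intro i
    fin_cases i
    exacts [hpa, hpb, hpc]
  have hp : p.comp (PresentedGroup.mk grels) = PresentedGroup.mk wrels :=
    FreeGroup.ext_hom _ _ hp_of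
  refine ⟨?_, le_antisymm ?_ ?_⟩
  · refine Function.Surjective.of_comp (g := PresentedGroup.mk grels) ?_
    rw [← MonoidHom.coe_comp, hp]
    exact PresentedGroup.mk_surjective wrels
  · refine PresentedGroup.ker_le_of_comp_mk hp ?_
    rintro _ (rfl | rfl | rfl)
    exacts [G.of_sq_mem_center 0, G.of_sq_mem_center 1, G.of_sq_mem_center 2]
  · intro x hx
    refine W.eq_one_of_forall_commute fun i => ?_
    rw [← hp_of i]
    exact Commute.map (Subgroup.mem_center_iff.mp hx _) p
end

section
/- Let M = ⟨a, b, c ∣ a²b = ba², b²a = ab², a²c = ca², b²c = cb², a²b² = c²⟩⁺ (the positive braid monoid of the torus on two strands). For every g ∈ M there exist unique natural numbers k, l and a unique element w of the universal Coxeter group W = ⟨a,b,c ∣ a²=b²=c²=1⟩ such that g = a^{2k} b^{2l} [w], where [w] denotes the image in M of the unique reduced positive word representing w. -/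
/-- The defining relations of the positive monoid presentation
`⟨a,b,c ∣ a²b=ba², b²a=ab², a²c=ca², b²c=cb², a²b²=c²⟩⁺`, on the free monoid
on `a = 0`, `b = 1`, `c = 2`. -/
inductive mrels : FreeMonoid (Fin 3) → FreeMonoid (Fin 3) → Prop
  | ab : mrels (.of 0 * .of 0 * .of 1) (.of 1 * (.of 0 * .of 0))
  | ba : mrels (.of 1 * .of 1 * .of 0) (.of 0 * (.of 1 * .of 1))
  | ac : mrels (.of 0 * .of 0 * .of 2) (.of 2 * (.of 0 * .of 0))
  | bc : mrels (.of 1 * .of 1 * .of 2) (.of 2 * (.of 1 * .of 1))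
  | c2 : mrels (.of 0 * .of 0 * (.of 1 * .of 1)) (.of 2 * .of 2)

/-- The positive monoid `B₂⁺(Σ_{1,0})` given by the presentation above. -/
abbrev M := PresentedMonoid mrels

def ma : M := PresentedMonoid.of mrels 0
def mb : M := PresentedMonoid.of mrels 1
def mc : M := PresentedMonoid.of mrels 2

/-- The natural projection from positive words to the universal Coxeter group `W(a,b,c)`. -/
def piW : FreeMonoid (Fin 3) →* W := FreeMonoid.lift fun i => (PresentedGroup.of i : W)

/-!
Since `a²` and `b²` are central and `x² ∈ {a², b², a²b²}` for every generator `x`, left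
multiplication by `x` on `a^{2k} b^{2l} [r]`, with `r` a word without two equal adjacent letters,
either prepends `x` to `r` or cancels it against the first letter of `r` and absorbs `x²` into
the exponents. This rule respects the defining relations, so it is an action of `M` on such
triples; acting on the empty triple computes a normal form that inverts
`(k, l, r) ↦ a^{2k} b^{2l} [r]`. The words without two equal adjacent letters are exactly the
geodesics for `W`: the same cancellation rule is an action of `W` on them, and a word containing
`xx` can be shortened.
-/

namespace List

variable {α : Type*}

theorem head?_ne_some_of_isChain_cons {x : α} {r : List α} (h : (x :: r).IsChain (· ≠ ·)) :
    r.head? ≠ some x := by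
  cases r with
  | nil => simp
  | cons y t => simpa using (isChain_cons_cons.mp h).1.symm

variable [DecidableEq α]

/-- Left multiplication by the generator `x` on reduced words of a free product of copies of
`ℤ/2`. -/
def cancelCons (x : α) (r : List α) : List α :=
  if r.head? = some x then r.tail else x :: r

theorem cancelCons_of_isChain_cons {x : α} {r : List α} (h : (x :: r).IsChain (· ≠ ·)) :
    cancelCons x r = x :: r :=
  if_neg (head?_ne_some_of_isChain_cons h)

theorem IsChain.cancelCons (x : α) {r : List α} (hr : r.IsChain (· ≠ ·)) :
    (cancelCons x r).IsChain (· ≠ ·) := by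
  by_cases h : r.head? = some x
  · simpa [List.cancelCons, h] using hr.tail
  · rw [List.cancelCons, if_neg h]
    cases r with
    | nil => exact isChain_singleton x
    | cons y t => exact isChain_cons_cons.mpr ⟨fun hxy => h (by simp [hxy]), hr⟩

@[simp]
theorem cancelCons_self_cons (x : α) (t : List α) : cancelCons x (x :: t) = t := by
  simp [cancelCons]

theorem cancelCons_cancelCons (x : α) {r : List α} (hr : r.IsChain (· ≠ ·)) :
    cancelCons x (cancelCons x r) = r := by
  by_cases h : r.head? = some x
  · obtain ⟨t, rfl⟩ := head?_eq_some_iff.mp h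
    rw [cancelCons_self_cons, cancelCons_of_isChain_cons hr]
  · simp [cancelCons, h]

theorem head?_cancelCons_eq_some_iff {x : α} {r : List α} (hr : r.IsChain (· ≠ ·)) :
    (cancelCons x r).head? = some x ↔ r.head? ≠ some x := by
  by_cases h : r.head? = some x
  · obtain ⟨t, rfl⟩ := head?_eq_some_iff.mp h
    simpa using head?_ne_some_of_isChain_cons hr
  · simp [cancelCons, h]

theorem length_cancelCons_le (x : α) (r : List α) : (cancelCons x r).length ≤ r.length + 1 := by
  unfold cancelCons
  split_ifs <;> simp; omega

theorem length_foldr_cancelCons_le (u l : List α) :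
    (u.foldr cancelCons l).length ≤ u.length + l.length := by
  induction u with
  | nil => simp
  | cons x u ih =>
    have := length_cancelCons_le x (u.foldr cancelCons l)
    simp only [foldr_cons, length_cons]
    omega

theorem foldr_cancelCons_nil_of_isChain {r : List α} (hr : r.IsChain (· ≠ ·)) :
    r.foldr cancelCons [] = r := by
  induction r with
  | nil => rfl
  | cons x t ih => rw [foldr_cons, ih hr.tail, cancelCons_of_isChain_cons hr]

end List

abbrev ReducedWord := {r : List (Fin 3) // r.IsChain (· ≠ ·)}

namespace ReducedWord

def nil : ReducedWord := ⟨[], .nil⟩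

def cancelCons (x : Fin 3) : Equiv.Perm ReducedWord :=
  Function.Involutive.toPerm (fun r => ⟨r.1.cancelCons x, r.2.cancelCons x⟩) fun r =>
    Subtype.ext (List.cancelCons_cancelCons x r.2)

@[simp]
theorem coe_cancelCons (x : Fin 3) (r : ReducedWord) : (cancelCons x r).1 = r.1.cancelCons x :=
  rfl

theorem cancelCons_mul_self (x : Fin 3) : cancelCons x * cancelCons x = 1 :=
  Equiv.ext fun r => Subtype.ext (List.cancelCons_cancelCons x r.2)

end ReducedWord

def wAction : W →* Equiv.Perm ReducedWord :=
  PresentedGroup.toGroup (f := ReducedWord.cancelCons) <| by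
    rintro r (rfl | rfl | rfl) <;> rw [map_pow, FreeGroup.lift_apply_of, sq,
      ReducedWord.cancelCons_mul_self]

theorem wAction_piW_apply (u : FreeMonoid (Fin 3)) (r : ReducedWord) :
    (wAction (piW u) r).1 = u.toList.foldr List.cancelCons r.1 := by
  induction u using FreeMonoid.inductionOn' with
  | one => rfl
  | of_mul x u ih =>
    rw [map_mul, map_mul, Equiv.Perm.mul_apply, FreeMonoid.toList_of_mul, List.foldr_cons, ← ih]
    rfl

theorem piW_of_mul_piW_of_self (x : Fin 3) : piW (.of x) * piW (.of x) = 1 := by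
  rw [← sq]
  refine (QuotientGroup.eq_one_iff _).mpr (Subgroup.subset_normalClosure ?_)
  fin_cases x <;> simp [wrels]

def IsReducedWord (r : FreeMonoid (Fin 3)) : Prop :=
  ∀ u : FreeMonoid (Fin 3), piW u = piW r → r.length ≤ u.length

theorem isReducedWord_of_isChain {r : FreeMonoid (Fin 3)} (hr : r.toList.IsChain (· ≠ ·)) :
    IsReducedWord r := by
  intro u h
  have := congrArg (fun w => (wAction w ReducedWord.nil).1) h
  simp only [wAction_piW_apply, ReducedWord.nil, List.foldr_cancelCons_nil_of_isChain hr] at this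
  show r.toList.length ≤ u.toList.length
  simpa [← this] using List.length_foldr_cancelCons_le u.toList []

theorem isChain_of_isReducedWord {r : FreeMonoid (Fin 3)} (hr : IsReducedWord r) :
    r.toList.IsChain (· ≠ ·) := by
  refine List.isChain_iff_forall_rel_of_append_cons_cons.mpr fun x y p q h hxy => ?_
  subst hxy
  have hshorter : piW (.ofList p * .ofList q) = piW r := by
    rw [← FreeMonoid.ofList_toList r, h]
    simp only [FreeMonoid.ofList_append, FreeMonoid.ofList_cons, map_mul]
    rw [← mul_assoc (piW (.of x)), piW_of_mul_piW_of_self, one_mul]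
  have := hr _ hshorter
  simp [FreeMonoid.length, h] at this

theorem PresentedMonoid.commute_of_forall_commute_of {α : Type*}
    {rels : FreeMonoid α → FreeMonoid α → Prop} {z : PresentedMonoid rels}
    (h : ∀ x, Commute z (of rels x)) (g : PresentedMonoid rels) : Commute z g := by
  induction g using PresentedMonoid.inductionOn with
  | h u =>
    induction u using FreeMonoid.inductionOn' with
    | one => exact Commute.one_right z
    | of_mul x u ih => rw [map_mul]; exact (h x).mul_right ih

theorem commute_ma_sq (g : M) : Commute (ma ^ 2) g := by
  refine PresentedMonoid.commute_of_forall_commute_of (fun x => ?_) g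
  rw [sq]
  fin_cases x
  · exact (Commute.refl ma).mul_left (Commute.refl ma)
  · exact PresentedMonoid.mk_eq_mk_of_rel mrels.ab
  · exact PresentedMonoid.mk_eq_mk_of_rel mrels.ac

theorem commute_mb_sq (g : M) : Commute (mb ^ 2) g := by
  refine PresentedMonoid.commute_of_forall_commute_of (fun x => ?_) g
  rw [sq]
  fin_cases x
  · exact PresentedMonoid.mk_eq_mk_of_rel mrels.ba
  · exact (Commute.refl mb).mul_left (Commute.refl mb)
  · exact PresentedMonoid.mk_eq_mk_of_rel mrels.bc

theorem commute_sq_pow_mul_sq_pow (k l : ℕ) (g : M) : Commute ((ma ^ 2) ^ k * (mb ^ 2) ^ l) g :=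
  ((commute_ma_sq g).pow_left k).mul_left ((commute_mb_sq g).pow_left l)

theorem sq_pow_mul_sq_pow_mul_sq_pow_mul_sq_pow (k l i j : ℕ) (g : M) :
    (ma ^ 2) ^ k * (mb ^ 2) ^ l * ((ma ^ 2) ^ i * (mb ^ 2) ^ j * g) =
      (ma ^ 2) ^ (k + i) * (mb ^ 2) ^ (l + j) * g := by
  simp only [pow_add, mul_assoc]
  rw [((commute_mb_sq _).pow_left l).left_comm]

/-- `sqExp x = (i, j)` records `x² = a^{2i} b^{2j}` in `M`. -/
def sqExp : Fin 3 → ℕ × ℕ := ![(1, 0), (0, 1), (1, 1)]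

theorem of_mul_of_self (x : Fin 3) :
    PresentedMonoid.of mrels x * PresentedMonoid.of mrels x =
      (ma ^ 2) ^ (sqExp x).1 * (mb ^ 2) ^ (sqExp x).2 := by
  fin_cases x
  · simp only [sqExp, sq]; rfl
  · simp only [sqExp, sq]; rfl
  · simp only [sqExp, sq]
    exact (PresentedMonoid.mk_eq_mk_of_rel mrels.c2).symm

abbrev NormalForm := (ℕ × ℕ) × ReducedWord

namespace NormalForm

def eval (s : NormalForm) : M :=
  ma ^ (2 * s.1.1) * mb ^ (2 * s.1.2) * PresentedMonoid.mk mrels (.ofList s.2.1)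

def letterAct (x : Fin 3) (s : NormalForm) : NormalForm :=
  (if s.2.1.head? = some x then s.1 + sqExp x else s.1, ReducedWord.cancelCons x s.2)

theorem letterAct_letterAct (x : Fin 3) (s : NormalForm) :
    letterAct x (letterAct x s) = (s.1 + sqExp x, s.2) := by
  obtain ⟨e, r, hr⟩ := s
  refine Prod.ext ?_ (Subtype.ext (List.cancelCons_cancelCons x hr))
  have := List.head?_cancelCons_eq_some_iff (x := x) hr
  by_cases h : r.head? = some x <;> simp_all [letterAct]

theorem letterAct_add (x : Fin 3) (e d : ℕ × ℕ) (r : ReducedWord) :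
    letterAct x (e + d, r) = ((letterAct x (e, r)).1 + d, (letterAct x (e, r)).2) := by
  simp only [letterAct]
  split_ifs <;> simp [add_right_comm]

theorem letterAct_letterAct_comm (x y : Fin 3) (s : NormalForm) :
    letterAct x (letterAct x (letterAct y s)) = letterAct y (letterAct x (letterAct x s)) := by
  rw [letterAct_letterAct, letterAct_letterAct, letterAct_add]

theorem letterAct_two_letterAct_two (s : NormalForm) :
    letterAct 2 (letterAct 2 s) = letterAct 0 (letterAct 0 (letterAct 1 (letterAct 1 s))) := by
  simp only [letterAct_letterAct, add_assoc]
  rfl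

def mAction : M →* Function.End NormalForm :=
  PresentedMonoid.lift (M := Function.End NormalForm) letterAct fun u v h => by
    funext s
    cases h
    exacts [letterAct_letterAct_comm 0 1 s, letterAct_letterAct_comm 1 0 s,
      letterAct_letterAct_comm 0 2 s, letterAct_letterAct_comm 1 2 s,
      (letterAct_two_letterAct_two s).symm]

theorem mAction_mul_apply (g h : M) (s : NormalForm) :
    mAction (g * h) s = mAction g (mAction h s) := by
  rw [map_mul]; rfl

theorem mAction_of (x : Fin 3) : mAction (PresentedMonoid.of mrels x) = letterAct x := rfl

theorem mAction_of_sq_pow (x : Fin 3) (n : ℕ) (s : NormalForm) :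
    mAction ((PresentedMonoid.of mrels x ^ 2) ^ n) s = (s.1 + n • sqExp x, s.2) := by
  induction n with
  | zero => rw [pow_zero, map_one, zero_smul, add_zero]; rfl
  | succ n ih =>
    rw [pow_succ', mAction_mul_apply, ih, sq, mAction_mul_apply, mAction_of, letterAct_letterAct,
      succ_nsmul, add_assoc]

theorem mAction_mk_ofList {r : List (Fin 3)} (hr : r.IsChain (· ≠ ·)) (e : ℕ × ℕ) :
    mAction (PresentedMonoid.mk mrels (.ofList r)) (e, .nil) = (e, ⟨r, hr⟩) := by
  induction r with
  | nil => rfl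
  | cons x t ih =>
    rw [FreeMonoid.ofList_cons, map_mul, mAction_mul_apply, ih hr.tail]
    exact Prod.ext (if_neg (List.head?_ne_some_of_isChain_cons hr))
      (Subtype.ext (List.cancelCons_of_isChain_cons hr))

theorem mAction_eval (s : NormalForm) : mAction s.eval ((0, 0), .nil) = s := by
  obtain ⟨⟨k, l⟩, r, hr⟩ := s
  rw [eval, pow_mul, pow_mul, mAction_mul_apply, mAction_mul_apply, mAction_mk_ofList hr]
  erw [mAction_of_sq_pow 0, mAction_of_sq_pow 1]
  simp [sqExp]

theorem of_mul_eval (x : Fin 3) (s : NormalForm) :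
    PresentedMonoid.of mrels x * s.eval = (letterAct x s).eval := by
  obtain ⟨⟨k, l⟩, r, hr⟩ := s
  simp only [eval, pow_mul]
  rw [(commute_sq_pow_mul_sq_pow k l _).symm.left_comm]
  by_cases h : r.head? = some x
  · obtain ⟨t, rfl⟩ := List.head?_eq_some_iff.mp h
    have hx : PresentedMonoid.of mrels x * PresentedMonoid.mk mrels (.ofList (x :: t)) =
        (ma ^ 2) ^ (sqExp x).1 * (mb ^ 2) ^ (sqExp x).2 * PresentedMonoid.mk mrels (.ofList t) := by
      rw [← of_mul_of_self, mul_assoc]; rfl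
    rw [hx, sq_pow_mul_sq_pow_mul_sq_pow_mul_sq_pow]
    simp [letterAct]
  · simp only [letterAct, ReducedWord.coe_cancelCons, List.cancelCons, if_neg h]
    rfl

theorem mul_eval (g : M) (s : NormalForm) : g * s.eval = (mAction g s).eval := by
  induction g using PresentedMonoid.inductionOn with
  | h u =>
    induction u using FreeMonoid.inductionOn' with
    | one => rfl
    | of_mul x u ih =>
      rw [map_mul, mul_assoc, ih, mAction_mul_apply]
      exact of_mul_eval x _

theorem eval_mAction (g : M) : (mAction g ((0, 0), .nil)).eval = g := by
  rw [← mul_eval]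
  exact mul_one g

end NormalForm

theorem stmt_18 (g : M) :
    ∃! x : ℕ × ℕ × FreeMonoid (Fin 3),
      (∀ u : FreeMonoid (Fin 3), piW u = piW x.2.2 → x.2.2.length ≤ u.length) ∧
      g = ma ^ (2 * x.1) * mb ^ (2 * x.2.1) * PresentedMonoid.mk mrels x.2.2 := by
  set s := NormalForm.mAction g ((0, 0), .nil)
  refine ⟨(s.1.1, s.1.2, .ofList s.2.1), ⟨isReducedWord_of_isChain s.2.2, ?_⟩, ?_⟩
  · exact (NormalForm.eval_mAction g).symm
  · rintro ⟨k, l, r⟩ ⟨hr, rfl⟩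
    have hs := NormalForm.mAction_eval ((k, l), ⟨r.toList, isChain_of_isReducedWord hr⟩)
    rw [NormalForm.eval, FreeMonoid.ofList_toList] at hs
    simp [s, hs]
end
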